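/- Let A be a Cayley matrix on a finite abelian group G of order n with diagonalization A = U Γ U* by the normalized character matrix U, let μ be a probability measure with all μ_i > 0 and μ_i N ∈ ℕ, W = D A Dᵀ the model matrix, and M̃ = U* M U. Then for λ ≠ 0 and a unit vector y ∈ ℂᴺ: y is a λ-eigenvector of W if and only if z = (1/√N) U* Dᵀ y is a (λ/N)-eigenvector of M̃Γ and y = (1/√N) D M⁻¹ U z. -/

import Mathlib

open scoped BigOperators ComplexConjugate
open Matrix

/-- The `N × n` block indicator matrix, over `ℂ`. -/
def blockD (N n : ℕ) (k : Fin n → ℕ) : Matrix (Fin N) (Fin n) ℂ :=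
  Matrix.of fun r j =>
    if (∑ i : Fin n, if (i : ℕ) < (j : ℕ) then k i else 0) ≤ (r : ℕ) ∧
        (r : ℕ) < (∑ i : Fin n, if (i : ℕ) < (j : ℕ) then k i else 0) + k j
    then 1 else 0

/-
Two facts drive the argument: `Dᵀ D = N M` (the blocks of `D` are disjoint and have sizes
`k i = μ i N`) and `U* U = 1` (orthogonality of characters). With `x = U* Dᵀ y`, applying `Dᵀ`
to `W y = λ y` gives `N M A Dᵀ y = λ Dᵀ y`, which is `M̃ Γ x = (λ/N) x` since `A = U Γ U*`;
applying `D M⁻¹ Dᵀ` instead gives `λ D M⁻¹ Dᵀ y = N W y = N λ y`, i.e. `N y = D M⁻¹ U x`.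
Conversely, `W (D M⁻¹ U x) = N D U Γ x = λ D M⁻¹ U x` because `M⁻¹ U (M̃ Γ) = U Γ`.
-/

open Finset

lemma card_filter_fin_le_and_lt {N a b : ℕ} (h : a + b ≤ N) :
    #{r : Fin N | a ≤ (r : ℕ) ∧ (r : ℕ) < a + b} = b := by
  rw [show ({r : Fin N | a ≤ (r : ℕ) ∧ (r : ℕ) < a + b} : Finset (Fin N)) =
      (Ico a (a + b)).attachFin (fun m hm => by rw [mem_Ico] at hm; omega) by
    ext r; simp, card_attachFin, Nat.card_Ico, Nat.add_sub_cancel_left]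

section
variable {n : ℕ} (k : Fin n → ℕ)

def blockStart (j : Fin n) : ℕ := ∑ i : Fin n, if (i : ℕ) < (j : ℕ) then k i else 0

lemma blockD_apply (N : ℕ) (r : Fin N) (j : Fin n) :
    blockD N n k r j =
      if blockStart k j ≤ (r : ℕ) ∧ (r : ℕ) < blockStart k j + k j then 1 else 0 := rfl

lemma blockStart_add_self (j : Fin n) :
    blockStart k j + k j = ∑ i : Fin n, if (i : ℕ) ≤ (j : ℕ) then k i else 0 := by
  rw [blockStart, ← Fintype.sum_ite_eq' j k, ← sum_add_distrib]
  refine sum_congr rfl fun i _ => ?_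
  simp only [Fin.ext_iff]
  split_ifs <;> omega

lemma blockStart_add_self_le_sum (j : Fin n) : blockStart k j + k j ≤ ∑ i, k i := by
  rw [blockStart_add_self]
  exact sum_le_sum fun i _ => by split_ifs <;> omega

lemma blockStart_add_self_le_of_lt {i j : Fin n} (hij : i < j) :
    blockStart k i + k i ≤ blockStart k j := by
  rw [blockStart_add_self]
  exact sum_le_sum fun l _ => by split_ifs <;> omega

end

lemma transpose_blockD_mul_blockD {N n : ℕ} {k : Fin n → ℕ} (hk : ∑ i, k i ≤ N) :
    (blockD N n k)ᵀ * blockD N n k = diagonal fun j => (k j : ℂ) := by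
  ext i j
  simp only [mul_apply, transpose_apply, blockD_apply, ite_zero_mul_ite_zero, mul_one,
    sum_boole]
  rcases eq_or_ne i j with rfl | hij
  · simp only [and_self, diagonal_apply_eq,
      card_filter_fin_le_and_lt ((blockStart_add_self_le_sum k i).trans hk)]
  · rw [diagonal_apply_ne _ hij, Nat.cast_eq_zero, card_eq_zero, filter_eq_empty_iff]
    rcases lt_or_gt_of_ne hij with h | h <;>
      · have := blockStart_add_self_le_of_lt k h
        intro r _; omega

lemma MonoidHom.conj_apply_of_norm_eq_one {G : Type*} [Group G] {χ : G →* ℂ}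
    (hχ : ∀ x, ‖χ x‖ = 1) (x : G) : conj (χ x) = χ x⁻¹ := by
  rw [← Complex.inv_eq_conj (hχ x), map_inv]

section
variable {G : Type*} [CommGroup G] [Fintype G]

lemma sum_conj_mul_eq_zero {χ ψ : G →* ℂ} (hχ : ∀ x, ‖χ x‖ = 1) (hne : χ ≠ ψ) :
    ∑ x, conj (χ x) * ψ x = 0 := by
  simp only [MonoidHom.conj_apply_of_norm_eq_one hχ]
  refine sum_hom_units_eq_zero (χ.comp invMonoidHom * ψ) fun h =>
    hne (MonoidHom.ext fun x => ?_)
  have hx : χ x ≠ 0 := norm_ne_zero_iff.mp (by rw [hχ x]; exact one_ne_zero)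
  simpa [map_inv, inv_mul_eq_one₀ hx] using DFunLike.congr_fun h x

lemma sum_conj_mul_self {χ : G →* ℂ} (hχ : ∀ x, ‖χ x‖ = 1) :
    ∑ x, conj (χ x) * χ x = Fintype.card G := by
  simp [← Complex.normSq_eq_conj_mul_self, Complex.normSq_eq_norm_sq, hχ]

end

lemma conjTranspose_mul_self_eq_one_of_characters {ι G : Type*} [Fintype ι] [DecidableEq ι]
    [CommGroup G] [Fintype G] (g : ι ≃ G) {χ : ι → G →* ℂ} (hχ : ∀ j x, ‖χ j x‖ = 1)
    (hinj : Function.Injective χ) {U : Matrix ι ι ℂ}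
    (hU : ∀ i j, U i j = χ j (g i) / (Real.sqrt (Fintype.card G) : ℂ)) :
    Uᴴ * U = 1 := by
  have hcard : ((Fintype.card G : ℝ) : ℂ) ≠ 0 := by simp [Fintype.card_ne_zero]
  ext i j
  have hsum := Fintype.sum_equiv g (fun r => conj (χ i (g r)) * χ j (g r))
    (fun x => conj (χ i x) * χ j x) fun _ => rfl
  simp only [mul_apply, conjTranspose_apply, hU, star_div₀, div_mul_div_comm, Complex.star_def,
    Complex.conj_ofReal, ← Complex.ofReal_mul, Real.mul_self_sqrt (Nat.cast_nonneg _), ← sum_div,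
    hsum, one_apply]
  split_ifs with hij
  · rw [hij, sum_conj_mul_self (hχ j)]; exact div_self hcard
  · rw [sum_conj_mul_eq_zero (hχ i) (hinj.ne hij), zero_div]

section
variable {K m n : Type*} [Field K] [Fintype m] [Fintype n] [DecidableEq n]
  {D : Matrix m n K} {A Γ M Mi U V : Matrix n n K} {c : K}

lemma mulVec_mulVec_eq_self_of_mul_eq_one {P Q : Matrix n n K} (h : P * Q = 1) (v : n → K) :
    P *ᵥ Q *ᵥ v = v := by
  rw [mulVec_mulVec, h, one_mulVec]

lemma mulVec_eq_smul_iff_of_transpose_mul_eq (hD : Dᵀ * D = c • M) (hMi : M * Mi = 1)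
    (hVU : V * U = 1) (hA : A = U * Γ * V) (hc : c ≠ 0) {lam : K} (hlam : lam ≠ 0)
    (y : m → K) :
    (D * A * Dᵀ) *ᵥ y = lam • y ↔
      (V * M * U * Γ) *ᵥ ((V * Dᵀ) *ᵥ y) = (lam / c) • ((V * Dᵀ) *ᵥ y) ∧
        c • y = (D * Mi * U) *ᵥ ((V * Dᵀ) *ᵥ y) := by
  have hD' (v : n → K) : Dᵀ *ᵥ D *ᵥ v = c • M *ᵥ v := by rw [mulVec_mulVec, hD, smul_mulVec]
  have hMi' := mulVec_mulVec_eq_self_of_mul_eq_one hMi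
  have hMiM' := mulVec_mulVec_eq_self_of_mul_eq_one (mul_eq_one_comm.mp hMi)
  have hVU' := mulVec_mulVec_eq_self_of_mul_eq_one hVU
  have hUV' := mulVec_mulVec_eq_self_of_mul_eq_one (mul_eq_one_comm.mp hVU)
  subst hA
  -- With every product split into nested `mulVec`s, the hypotheses act as cancellation rules.
  simp only [← mulVec_mulVec]
  constructor
  · intro hWy
    have hMA : c • M *ᵥ U *ᵥ Γ *ᵥ V *ᵥ Dᵀ *ᵥ y = lam • Dᵀ *ᵥ y := by
      rw [← hD', hWy, mulVec_smul]
    constructor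
    · apply smul_right_injective _ hc
      simp only [← mulVec_smul, hMA, smul_smul, mul_div_cancel₀ _ hc]
    · apply smul_right_injective _ hlam
      calc lam • c • y = D *ᵥ Mi *ᵥ Dᵀ *ᵥ D *ᵥ U *ᵥ Γ *ᵥ V *ᵥ Dᵀ *ᵥ y := by
            rw [hD', mulVec_smul, mulVec_smul, hMiM', hWy, smul_comm]
        _ = lam • D *ᵥ Mi *ᵥ U *ᵥ V *ᵥ Dᵀ *ᵥ y := by
            simp only [hWy, hUV', mulVec_smul]
  · rintro ⟨hEig, hy⟩
    have hUΓ : U *ᵥ Γ *ᵥ V *ᵥ Dᵀ *ᵥ y = (lam / c) • Mi *ᵥ U *ᵥ V *ᵥ Dᵀ *ᵥ y := by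
      rw [← mulVec_smul, ← mulVec_smul, ← hEig, hUV', hMiM']
    apply smul_right_injective _ hc
    calc c • D *ᵥ U *ᵥ Γ *ᵥ V *ᵥ Dᵀ *ᵥ y
        = D *ᵥ U *ᵥ Γ *ᵥ V *ᵥ Dᵀ *ᵥ D *ᵥ Mi *ᵥ U *ᵥ V *ᵥ Dᵀ *ᵥ y := by
          simp only [← hy, mulVec_smul]
      _ = c • D *ᵥ U *ᵥ Γ *ᵥ V *ᵥ Dᵀ *ᵥ y := by simp only [hD', mulVec_smul, hMi', hVU']
      _ = lam • D *ᵥ Mi *ᵥ U *ᵥ V *ᵥ Dᵀ *ᵥ y := by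
          rw [hUΓ, mulVec_smul, smul_smul, mul_div_cancel₀ _ hc]
      _ = c • lam • y := by rw [← hy, smul_comm]
end

theorem eigvec_W_iff_eigvec_MtGamma_general
    (n N : ℕ) (hN : 0 < N)
    (G : Type*) [CommGroup G] [Fintype G]
    (g : Fin n ≃ G)
    (χ : Fin n → (G →* ℂ)) (hχuni : ∀ j, ∀ x : G, ‖χ j x‖ = 1)
    (hχinj : Function.Injective χ)
    (A : Matrix (Fin n) (Fin n) ℂ)
    (U : Matrix (Fin n) (Fin n) ℂ)
    (hU : ∀ i j, U i j = χ j (g i) / (Real.sqrt n : ℂ))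
    (γ : Fin n → ℂ) (hΓ : A = U * Matrix.diagonal γ * Uᴴ)
    (μ : Fin n → ℝ) (hμpos : ∀ i, 0 < μ i)
    (k : Fin n → ℕ)
    (hk : ∀ i, (k i : ℝ) = μ i * N) (hksum : ∑ i, k i = N)
    (W : Matrix (Fin N) (Fin N) ℂ)
    (hW : W = blockD N n k * A * (blockD N n k)ᵀ)
    (Mt : Matrix (Fin n) (Fin n) ℂ)
    (hMt : Mt = Uᴴ * Matrix.diagonal (fun i => (μ i : ℂ)) * U)
    (lam : ℝ) (hlam : lam ≠ 0)
    (y : Fin N → ℂ) :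
    W.mulVec y = (lam : ℂ) • y ↔
      ((Mt * Matrix.diagonal γ).mulVec
          (((Real.sqrt N : ℂ))⁻¹ • (Uᴴ * (blockD N n k)ᵀ).mulVec y) =
        ((lam / N : ℝ) : ℂ) •
          (((Real.sqrt N : ℂ))⁻¹ • (Uᴴ * (blockD N n k)ᵀ).mulVec y) ∧
      y = ((Real.sqrt N : ℂ))⁻¹ •
          (blockD N n k * Matrix.diagonal (fun i => ((μ i : ℂ))⁻¹) * U).mulVec
            (((Real.sqrt N : ℂ))⁻¹ • (Uᴴ * (blockD N n k)ᵀ).mulVec y)) := by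
  subst hW hMt
  have hNc : (N : ℂ) ≠ 0 := Nat.cast_ne_zero.mpr hN.ne'
  have hUU : Uᴴ * U = 1 := conjTranspose_mul_self_eq_one_of_characters g hχuni hχinj fun i j => by
    rw [hU, Fintype.card_congr g.symm, Fintype.card_fin]
  have hD : (blockD N n k)ᵀ * blockD N n k = (N : ℂ) • diagonal fun i => (μ i : ℂ) := by
    rw [transpose_blockD_mul_blockD hksum.le, ← diagonal_smul]
    congr 1
    funext i
    simp only [Pi.smul_apply, smul_eq_mul, ← Complex.ofReal_natCast, hk, Complex.ofReal_mul,
      mul_comm]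
  have hMi : (diagonal fun i => (μ i : ℂ)) * diagonal (fun i => (μ i : ℂ)⁻¹) = 1 := by
    rw [diagonal_mul_diagonal, ← diagonal_one]
    exact congrArg diagonal (funext fun i => mul_inv_cancel₀ (by exact_mod_cast (hμpos i).ne'))
  have hs : (Real.sqrt N : ℂ) ≠ 0 := by
    exact_mod_cast (Real.sqrt_pos.mpr (by exact_mod_cast hN)).ne'
  have hss : (Real.sqrt N : ℂ)⁻¹ * (Real.sqrt N : ℂ)⁻¹ = (N : ℂ)⁻¹ := by
    rw [← mul_inv, ← Complex.ofReal_mul, Real.mul_self_sqrt (Nat.cast_nonneg N),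
      Complex.ofReal_natCast]
  rw [mulVec_eq_smul_iff_of_transpose_mul_eq hD hMi hUU hΓ hNc (by exact_mod_cast hlam),
    mulVec_smul, smul_comm _ (Real.sqrt N : ℂ)⁻¹, (smul_right_injective _ (inv_ne_zero hs)).eq_iff,
    mulVec_smul, smul_smul, hss, eq_inv_smul_iff₀ hNc, Complex.ofReal_div, Complex.ofReal_natCast]

/-- for a Cayley matrix `A = U Γ U*` on a finite abelian group `G` (with `U`
the normalized character matrix), model matrix `W = D A Dᵀ` and `M̃ = U* M U`: for `λ ≠ 0`
and a unit vector `y`, `y` is a `λ`-eigenvector of `W` iff `z = (1/√N) U* Dᵀ y` is a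
`(λ/N)`-eigenvector of `M̃ Γ` and `y = (1/√N) D M⁻¹ U z`. -/
theorem eigvec_W_iff_eigvec_MtGamma
    (n N : ℕ) (hn : 0 < n) (hN : 0 < N)
    (G : Type*) [CommGroup G] [Fintype G] [DecidableEq G]
    (g : Fin n ≃ G)
    (χ : Fin n → (G →* ℂ)) (hχuni : ∀ j, ∀ x : G, ‖χ j x‖ = 1)
    (hχinj : Function.Injective χ)
    (hχsurj : ∀ ψ : G →* ℂ, (∀ x : G, ‖ψ x‖ = 1) → ∃ j, ψ = χ j)
    (f : G → ℝ) (hf : ∀ x : G, f x = f x⁻¹)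
    (A : Matrix (Fin n) (Fin n) ℂ)
    (hA : ∀ i j, A i j = (f ((g i)⁻¹ * g j) : ℂ))
    (U : Matrix (Fin n) (Fin n) ℂ)
    (hU : ∀ i j, U i j = χ j (g i) / (Real.sqrt n : ℂ))
    (γ : Fin n → ℂ) (hΓ : A = U * Matrix.diagonal γ * Uᴴ)
    (μ : Fin n → ℝ) (hμpos : ∀ i, 0 < μ i) (hμsum : ∑ i, μ i = 1)
    (k : Fin n → ℕ) (hkpos : ∀ i, 0 < k i)
    (hk : ∀ i, (k i : ℝ) = μ i * N) (hksum : ∑ i, k i = N)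
    (W : Matrix (Fin N) (Fin N) ℂ)
    (hW : W = blockD N n k * A * (blockD N n k)ᵀ)
    (Mt : Matrix (Fin n) (Fin n) ℂ)
    (hMt : Mt = Uᴴ * Matrix.diagonal (fun i => (μ i : ℂ)) * U)
    (lam : ℝ) (hlam : lam ≠ 0)
    (y : Fin N → ℂ) (hy_unit : star y ⬝ᵥ y = 1) :
    W.mulVec y = (lam : ℂ) • y ↔
      ((Mt * Matrix.diagonal γ).mulVec
          (((Real.sqrt N : ℂ))⁻¹ • (Uᴴ * (blockD N n k)ᵀ).mulVec y) =
        ((lam / N : ℝ) : ℂ) •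
          (((Real.sqrt N : ℂ))⁻¹ • (Uᴴ * (blockD N n k)ᵀ).mulVec y) ∧
      y = ((Real.sqrt N : ℂ))⁻¹ •
          (blockD N n k * Matrix.diagonal (fun i => ((μ i : ℂ))⁻¹) * U).mulVec
            (((Real.sqrt N : ℂ))⁻¹ • (Uᴴ * (blockD N n k)ᵀ).mulVec y)) :=
  eigvec_W_iff_eigvec_MtGamma_general n N hN G g χ hχuni hχinj A U hU γ hΓ μ hμpos k hk hksum W hW
    Mt hMt lam hlam y
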